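/- arXiv:1408.2325 — 2 statements merged into one kernel-verified Lean document; each statement's English description precedes it below -/
import Mathlib

section
/- There exists a group G that is finitely presented, infinite, and has no nontrivial finite quotients; that is, for every finite group Q, every group homomorphism f : G → Q is trivial (f(g) = 1 for all g ∈ G). -/
/-!
Higman's group `⟨a₀, a₁, a₂, a₃ | a₍ᵢ₊₁₎⁻¹ aᵢ a₍ᵢ₊₁₎ = aᵢ²⟩` (indices mod 4) is such a group.

In a finite group, `b⁻¹ a b = a²` forces `ord a ∣ 2 ^ ord b - 1`. If `p` is the least prime dividing
some `ord aᵢ`, then `p ∣ 2 ^ m - 1` with `m = ord a₍ᵢ₊₁₎`, so the order of `2` modulo `p` is a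
divisor of `m` that is `> 1` and `< p`; its prime factors contradict the minimality of `p`. Hence
every homomorphism to a finite group kills the generators.

The group is nontrivial, hence infinite: `x ↦ x + 1` and `x ↦ x / 2` realise `BS(1, 2)` on `ℚ`,
two copies amalgamated along `⟨x ↦ x / 2⟩ = ⟨x ↦ x + 1⟩` give `⟨x, y, z⟩` in which `x, z` freely
generate a free group (normal form in amalgams), and two copies of that amalgamated along
`F(x, z) = F(z, x)` receive `a₀ ↦ x ≠ 1`.
-/

/-- A group is finitely presented if it is isomorphic to a `PresentedGroup` on a finite
generating type with a finite set of relators. -/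
def IsFinitelyPresented (G : Type*) [Group G] : Prop :=
  ∃ (k : ℕ) (rels : Set (FreeGroup (Fin k))), rels.Finite ∧
    Nonempty (G ≃* PresentedGroup rels)

open Function Monoid

theorem inv_pow_mul_mul_pow_eq_pow_two_pow {G : Type*} [Group G] {a b : G}
    (h : b⁻¹ * a * b = a ^ 2) (k : ℕ) : (b ^ k)⁻¹ * a * b ^ k = a ^ 2 ^ k := by
  induction k with
  | zero => simp
  | succ k ih =>
    calc (b ^ (k + 1))⁻¹ * a * b ^ (k + 1) = (b ^ k)⁻¹ * (b⁻¹ * a * b) * b ^ k := by group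
      _ = ((b ^ k)⁻¹ * a * b ^ k) ^ 2 := by simp only [h, sq, mul_assoc, mul_inv_cancel_left]
      _ = a ^ 2 ^ (k + 1) := by rw [ih, ← pow_mul, pow_succ]

theorem orderOf_dvd_two_pow_orderOf_sub_one {G : Type*} [Group G] {a b : G}
    (h : b⁻¹ * a * b = a ^ 2) : orderOf a ∣ 2 ^ orderOf b - 1 := by
  have key := inv_pow_mul_mul_pow_eq_pow_two_pow h (orderOf b)
  rw [pow_orderOf_eq_one, inv_one, one_mul, mul_one] at key
  refine orderOf_dvd_of_pow_eq_one (mul_left_cancel (a := a) ?_)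
  rw [mul_one, ← pow_succ', Nat.sub_add_cancel Nat.one_le_two_pow, ← key]

theorem Nat.exists_prime_lt_and_dvd_of_prime_dvd_two_pow_sub_one {p m : ℕ} (hp : p.Prime)
    (hm : m ≠ 0) (h : p ∣ 2 ^ m - 1) : ∃ q, q.Prime ∧ q < p ∧ q ∣ m := by
  have := Fact.mk hp
  have two_pow : (2 : ZMod p) ^ m = 1 := by
    have := (ZMod.natCast_eq_zero_iff _ p).mpr h
    rw [Nat.cast_sub Nat.one_le_two_pow, sub_eq_zero] at this
    exact_mod_cast this
  have two_ne_zero : (2 : ZMod p) ≠ 0 := by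
    intro h2
    rw [h2, zero_pow hm] at two_pow
    exact zero_ne_one two_pow
  have two_ne_one : (2 : ZMod p) ≠ 1 := fun h2 =>
    one_ne_zero (by linear_combination h2 : (1 : ZMod p) = 0)
  obtain ⟨q, hq, hqd⟩ := Nat.exists_prime_and_dvd (orderOf_eq_one_iff.not.mpr two_ne_one)
  refine ⟨q, hq, ?_, hqd.trans (orderOf_dvd_of_pow_eq_one two_pow)⟩
  exact (Nat.le_of_dvd (Nat.sub_pos_of_lt hp.one_lt)
    (hqd.trans (ZMod.orderOf_dvd_card_sub_one two_ne_zero))).trans_lt (Nat.sub_lt hp.pos one_pos)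

theorem eq_one_of_inv_mul_mul_eq_sq {ι G : Type*} [Group G] [Finite G] (s : ι → ι) {a : ι → G}
    (h : ∀ i, (a (s i))⁻¹ * a i * a (s i) = a i ^ 2) (i : ι) : a i = 1 := by
  classical
  by_contra hi
  have hex : ∃ p, p.Prime ∧ ∃ i, p ∣ orderOf (a i) := by
    obtain ⟨p, hp, hpi⟩ := Nat.exists_prime_and_dvd (orderOf_eq_one_iff.not.mpr hi)
    exact ⟨p, hp, i, hpi⟩
  obtain ⟨hp, j, hpj⟩ := Nat.find_spec hex
  obtain ⟨q, hq, hqp, hqm⟩ := Nat.exists_prime_lt_and_dvd_of_prime_dvd_two_pow_sub_one hp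
    (orderOf_pos _).ne' (hpj.trans (orderOf_dvd_two_pow_orderOf_sub_one (h j)))
  exact Nat.find_min hex hqp ⟨hq, s j, hqm⟩

namespace Monoid.PushoutI

variable {ι H : Type*} {G : ι → Type*} [Group H] [∀ i, Group (G i)] {φ : ∀ i, H →* G i}

theorem of_eq_of_of_apply_eq {i j : ι} (h : H) {g : G i} {g' : G j} (hi : φ i h = g)
    (hj : φ j h = g') : of (φ := φ) i g = of j g' := by
  rw [← hi, ← hj, of_apply_eq_base, of_apply_eq_base]

theorem injective_coprodI_lift_of_notMem_range (hφ : ∀ i, Injective (φ i)) {K : ι → Type*}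
    [∀ i, Group (K i)] (f : ∀ i, K i →* G i) (hf : ∀ i k, k ≠ 1 → f i k ∉ (φ i).range) :
    Injective (CoprodI.lift fun i => (of (φ := φ) i).comp (f i)) := by
  classical
  rw [injective_iff_map_eq_one]
  intro x hx
  set w := CoprodI.Word.equiv x
  have hxw : w.prod = x := CoprodI.Word.equiv.left_inv x
  let w' : CoprodI.Word G :=
    { toList := w.toList.map fun l => ⟨l.1, f l.1 l.2⟩
      ne_one := by
        simp only [List.mem_map]
        rintro _ ⟨l, hl, rfl⟩ h1
        exact hf l.1 l.2 (w.ne_one l hl) (by simp only at h1; rw [h1]; exact one_mem _)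
      chain_ne := List.isChain_map _ |>.mpr w.chain_ne }
  have hred : Reduced φ w' := by
    simp only [Reduced, w', List.mem_map]
    rintro _ ⟨l, hl, rfl⟩
    exact hf l.1 l.2 (w.ne_one l hl)
  have hprod : ofCoprodI w'.prod = CoprodI.lift (fun i => (of (φ := φ) i).comp (f i)) w.prod := by
    simp [CoprodI.Word.prod, w', map_list_prod, Function.comp_def, ofCoprodI_of]
  have hw' : w' = .empty :=
    hred.eq_empty_of_mem_range hφ (by rw [hprod, hxw, hx]; exact one_mem _)
  have hw : w = .empty := by
    ext1
    simpa [w', CoprodI.Word.empty] using congrArg CoprodI.Word.toList hw'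
  rw [← hxw, hw, CoprodI.Word.prod_empty]

theorem injective_freeGroup_lift_of_zpow_notMem_range (hφ : ∀ i, Injective (φ i))
    (g : ∀ i, G i) (hg : ∀ i (n : ℤ), n ≠ 0 → g i ^ n ∉ (φ i).range) :
    Injective (FreeGroup.lift fun i => of (φ := φ) i (g i)) := by
  have hlift : FreeGroup.lift (fun i => of (φ := φ) i (g i)) =
      (CoprodI.lift fun i => (of i).comp (FreeGroup.lift fun _ => g i)).comp
        freeGroupEquivCoprodI.toMonoidHom := by
    ext i
    simp
  rw [hlift, MonoidHom.coe_comp]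
  refine (injective_coprodI_lift_of_notMem_range hφ _ fun i k hk => ?_).comp
    freeGroupEquivCoprodI.injective
  obtain ⟨n, rfl⟩ : ∃ n : ℤ, FreeGroup.of () ^ n = k := ⟨_, FreeGroup.equivIntOfUnique.left_inv k⟩
  simpa using hg i n (by rintro rfl; simp at hk)

end Monoid.PushoutI

def higmanRelators (n : ℕ) [NeZero n] : Set (FreeGroup (Fin n)) :=
  Set.range fun i => (.of (i + 1))⁻¹ * .of i * .of (i + 1) * (.of i ^ 2)⁻¹

abbrev HigmanGroup (n : ℕ) [NeZero n] : Type := PresentedGroup (higmanRelators n)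

namespace HigmanGroup

open PresentedGroup PushoutI

section Relations

variable {n : ℕ} [NeZero n]

theorem inv_mul_mul_eq_sq (i : Fin n) :
    (of (i + 1) : HigmanGroup n)⁻¹ * of i * of (i + 1) = of i ^ 2 := by
  simpa [PresentedGroup.of] using mk_eq_mk_of_mul_inv_mem (rels := higmanRelators n) ⟨i, rfl⟩

theorem hom_eq_one_of_finite {Q : Type*} [Group Q] [Finite Q] (f : HigmanGroup n →* Q) : f = 1 :=
  PresentedGroup.ext fun i => eq_one_of_inv_mul_mul_eq_sq (a := fun i => f (of i)) (· + 1)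
    (fun i => by simpa using congrArg f (inv_mul_mul_eq_sq i)) i

theorem infinite [Nontrivial (HigmanGroup n)] : Infinite (HigmanGroup n) := by
  by_contra h
  have := not_infinite_iff_finite.mp h
  obtain ⟨x, hx⟩ := exists_ne (1 : HigmanGroup n)
  exact hx (DFunLike.congr_fun (hom_eq_one_of_finite (MonoidHom.id _)) x)

end Relations

def shift : Equiv.Perm ℚ := Equiv.addRight 1

def halve : Equiv.Perm ℚ := MulAction.toPerm (Units.mk0 (2 : ℚ) two_ne_zero)⁻¹

theorem shift_zpow_apply (n : ℤ) (q : ℚ) : (shift ^ n) q = q + n := by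
  simp [shift]

theorem halve_zpow_apply (n : ℤ) (q : ℚ) : (halve ^ n) q = q / 2 ^ n := by
  rw [halve, ← MulAction.toPermHom_apply, ← map_zpow]
  simp [Units.smul_def, div_eq_mul_inv, mul_comm]

theorem halve_inv_mul_shift_mul_halve : halve⁻¹ * shift * halve = shift ^ 2 := by
  ext q
  simp [halve, shift, Units.smul_def, sq, add_assoc, one_add_one_eq_two]

theorem eq_zero_of_shift_zpow_eq_halve_zpow {n m : ℤ} (h : shift ^ n = halve ^ m) :
    n = 0 ∧ m = 0 := by
  have h0 := congr($h 0)
  have h1 := congr($h 1)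
  simp only [shift_zpow_apply, halve_zpow_apply, zero_add, zero_div, Int.cast_eq_zero] at h0
  subst h0
  simpa [halve_zpow_apply, zpow_eq_one_iff_right₀] using h1

def halfBase : Fin 2 → (Multiplicative ℤ →* Equiv.Perm ℚ) :=
  ![zpowersHom _ halve, zpowersHom _ shift]

abbrev Half : Type := PushoutI halfBase

theorem halfBase_injective (i : Fin 2) : Injective (halfBase i) := by
  rw [injective_iff_map_eq_one]
  intro n hn
  fin_cases i
  · simpa using (eq_zero_of_shift_zpow_eq_halve_zpow (n := 0) (m := n.toAdd)
      (by simpa [halfBase] using hn.symm)).2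
  · simpa using (eq_zero_of_shift_zpow_eq_halve_zpow (n := n.toAdd) (m := 0)
      (by simpa [halfBase] using hn)).1

def halfX : Half := of 0 shift
def halfY : Half := of 0 halve
def halfZ : Half := of 1 halve

theorem halfY_eq : halfY = of 1 shift :=
  of_eq_of_of_apply_eq (.ofAdd 1) (by simp [halfBase]) (by simp [halfBase])

theorem halfY_inv_mul_halfX_mul_halfY : halfY⁻¹ * halfX * halfY = halfX ^ 2 := by
  simpa [halfX, halfY] using congrArg (of (φ := halfBase) 0) halve_inv_mul_shift_mul_halve

theorem halfZ_inv_mul_halfY_mul_halfZ : halfZ⁻¹ * halfY * halfZ = halfY ^ 2 := by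
  rw [halfY_eq]
  simpa [halfZ] using congrArg (of (φ := halfBase) 1) halve_inv_mul_shift_mul_halve

theorem halfX_ne_one : halfX ≠ 1 := by
  rw [halfX, Ne, map_eq_one_iff _ (of_injective halfBase_injective 0)]
  intro h
  simpa [shift] using congr($h 0)

def edge : FreeGroup (Fin 2) →* Half := FreeGroup.lift fun i => of i (![shift, halve] i)

theorem edge_injective : Injective edge := by
  refine injective_freeGroup_lift_of_zpow_notMem_range halfBase_injective _ fun i n hn => ?_
  rintro ⟨m, hm⟩
  fin_cases i
  · exact hn (eq_zero_of_shift_zpow_eq_halve_zpow (by simpa [halfBase] using hm.symm)).1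
  · exact hn (eq_zero_of_shift_zpow_eq_halve_zpow (by simpa [halfBase] using hm)).2

def amalgamBase : Fin 2 → (FreeGroup (Fin 2) →* Half) :=
  ![edge, edge.comp (FreeGroup.freeGroupCongr (Equiv.swap 0 1)).toMonoidHom]

abbrev Amalgam : Type := PushoutI amalgamBase

theorem amalgamBase_injective (i : Fin 2) : Injective (amalgamBase i) := by
  fin_cases i
  exacts [edge_injective, edge_injective.comp (MulEquiv.injective _)]

theorem of_zero_halfX : (of 0 halfX : Amalgam) = of 1 halfZ :=
  of_eq_of_of_apply_eq (.of 0) (by simp [amalgamBase, edge, halfX])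
    (by simp [amalgamBase, edge, halfZ])

theorem of_zero_halfZ : (of 0 halfZ : Amalgam) = of 1 halfX :=
  of_eq_of_of_apply_eq (.of 1) (by simp [amalgamBase, edge, halfZ])
    (by simp [amalgamBase, edge, halfX])

def amalgamGen : Fin 4 → Amalgam := ![of 0 halfX, of 0 halfY, of 0 halfZ, of 1 halfY]

theorem amalgamGen_inv_mul_mul_eq_sq (i : Fin 4) :
    (amalgamGen (i + 1))⁻¹ * amalgamGen i * amalgamGen (i + 1) = amalgamGen i ^ 2 := by
  fin_cases i
  · simpa [amalgamGen] using congrArg (of (φ := amalgamBase) 0) halfY_inv_mul_halfX_mul_halfY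
  · simpa [amalgamGen] using congrArg (of (φ := amalgamBase) 0) halfZ_inv_mul_halfY_mul_halfZ
  · simpa [amalgamGen, of_zero_halfZ] using
      congrArg (of (φ := amalgamBase) 1) halfY_inv_mul_halfX_mul_halfY
  · simpa [amalgamGen, of_zero_halfX] using
      congrArg (of (φ := amalgamBase) 1) halfZ_inv_mul_halfY_mul_halfZ

theorem amalgamGen_zero_ne_one : amalgamGen 0 ≠ 1 := by
  rw [amalgamGen, Matrix.cons_val_zero, Ne, map_eq_one_iff _ (of_injective amalgamBase_injective 0)]
  exact halfX_ne_one

instance : Nontrivial (HigmanGroup 4) := by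
  let f : HigmanGroup 4 →* Amalgam := toGroup (f := amalgamGen) <| by
    rintro _ ⟨i, rfl⟩
    simpa [mul_inv_eq_one] using amalgamGen_inv_mul_mul_eq_sq i
  refine ⟨⟨.of 0, 1, fun h => amalgamGen_zero_ne_one ?_⟩⟩
  simpa [f] using congrArg f h

end HigmanGroup

/-- **Wise's theorem** (group-theoretic content): there is a finitely presented infinite
group all of whose homomorphisms to finite groups are trivial. -/
theorem exists_fp_infinite_no_nontrivial_finite_quotients :
    ∃ (G : Type) (_ : Group G), IsFinitelyPresented G ∧ Infinite G ∧
      ∀ (Q : Type) (_ : Group Q), Finite Q → ∀ f : G →* Q, ∀ g : G, f g = 1 :=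
  ⟨HigmanGroup 4, inferInstance, ⟨4, higmanRelators 4, Set.finite_range _, ⟨.refl _⟩⟩,
    HigmanGroup.infinite, fun _ _ _ f g => DFunLike.congr_fun (HigmanGroup.hom_eq_one_of_finite f) g⟩
end

section
/- The predicate on pairs (P, w), where P is a finite presentation and w is a word in the generators of P, asserting that the element of the group presented by P represented by w survives in a finite quotient, is recursively enumerable (REPred with respect to the encoding of such pairs). -/
/-!
By Cayley's theorem an element survives in a finite quotient iff some homomorphism to a
symmetric group `Perm (Fin m)` moves it, and a homomorphism from a finitely presented group
to `Perm (Fin m)` is an assignment of permutations to the generators under which every relator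
acts trivially. Such an assignment is finite data: coding each permutation by the list of its
values, whether a code is valid, kills the relators and moves the word are primitive recursive
conditions. The predicate is therefore the projection of a primitive recursive relation, and
an unbounded search over codes semidecides it.
-/

/-- A finite presentation: a number of generators `k` together with a finite list of
relator words. A word is a list of letters `(i, b) : ℕ × Bool`, interpreted as the
generator `i` of `FreeGroup (Fin k)` (or its inverse when `b = false`) when `i < k`,
and as the identity otherwise. This plain (non-dependent) encoding makes the type of
presentations (and of presentation–word pairs) `Primcodable`, so Mathlib's computability
notions apply. -/
abbrev FinPres : Type := ℕ × List (List (ℕ × Bool))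

/-- The element of `FreeGroup (Fin k)` spelled by a single letter. -/
def presLetter (k : ℕ) (l : ℕ × Bool) : FreeGroup (Fin k) :=
  if h : l.1 < k then
    (cond l.2 (FreeGroup.of (⟨l.1, h⟩ : Fin k)) (FreeGroup.of (⟨l.1, h⟩ : Fin k))⁻¹)
  else 1

/-- The element of `FreeGroup (Fin k)` spelled by a word. -/
def presWord (k : ℕ) (w : List (ℕ × Bool)) : FreeGroup (Fin k) :=
  (w.map (presLetter k)).prod

/-- The set of relators of a finite presentation, as elements of the free group. -/
def presRels (P : FinPres) : Set (FreeGroup (Fin P.1)) :=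
  { g | ∃ w ∈ P.2, presWord P.1 w = g }

/-- The group presented by a finite presentation: the free group on `Fin k` modulo the
normal closure of the relators. -/
abbrev presGrp (P : FinPres) : Type := PresentedGroup (presRels P)

/-- The element of the presented group represented by a word in the generators. -/
def presElt (P : FinPres) (w : List (ℕ × Bool)) : presGrp P :=
  PresentedGroup.mk (presRels P) (presWord P.1 w)

/-- An element `g` of a group survives in a finite quotient if some homomorphism to a
finite group does not kill it. -/
def SurvivesInFiniteQuotient {G : Type*} [Group G] (g : G) : Prop :=
  ∃ (Q : Type) (_ : Group Q) (_ : Finite Q) (f : G →* Q), f g ≠ 1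

open Equiv

theorem survivesInFiniteQuotient_iff_exists_perm {G : Type*} [Group G] (g : G) :
    SurvivesInFiniteQuotient g ↔ ∃ (m : ℕ) (φ : G →* Perm (Fin m)), φ g ≠ 1 := by
  constructor
  · rintro ⟨Q, _, _, f, hf⟩
    let cayley : Q →* Perm (Fin (Nat.card Q)) :=
      (Finite.equivFin Q).permCongrHom.toMonoidHom.comp (MulAction.toPermHom Q Q)
    have hcayley : Function.Injective cayley :=
      (Finite.equivFin Q).permCongrHom.injective.comp MulAction.toPerm_injective
    exact ⟨_, cayley.comp f, fun h => hf ((map_eq_one_iff cayley hcayley).1 h)⟩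
  · rintro ⟨m, φ, hφ⟩
    exact ⟨Perm (Fin m), inferInstance, inferInstance, φ, hφ⟩

theorem PresentedGroup.exists_hom_mk_ne_one_iff {α H : Type*} [Group H]
    {rels : Set (FreeGroup α)} (x : FreeGroup α) :
    (∃ φ : PresentedGroup rels →* H, φ (PresentedGroup.mk rels x) ≠ 1) ↔
      ∃ f : α → H, (∀ r ∈ rels, FreeGroup.lift f r = 1) ∧ FreeGroup.lift f x ≠ 1 := by
  constructor
  · rintro ⟨φ, hφ⟩
    have hlift : FreeGroup.lift (φ ∘ PresentedGroup.of) = φ.comp (PresentedGroup.mk rels) :=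
      FreeGroup.ext_hom _ _ fun a => by simp [PresentedGroup.of]
    refine ⟨φ ∘ PresentedGroup.of, fun r hr => ?_, by rwa [hlift]⟩
    rw [hlift, MonoidHom.comp_apply, PresentedGroup.one_of_mem hr, map_one]
  · rintro ⟨f, hrels, hx⟩
    exact ⟨PresentedGroup.toGroup hrels, hx⟩

theorem survivesInFiniteQuotient_presElt_iff (P : FinPres) (w : List (ℕ × Bool)) :
    SurvivesInFiniteQuotient (presElt P w) ↔ ∃ (m : ℕ) (f : Fin P.1 → Perm (Fin m)),
      (∀ r ∈ P.2, FreeGroup.lift f (presWord P.1 r) = 1) ∧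
        FreeGroup.lift f (presWord P.1 w) ≠ 1 := by
  rw [presElt, survivesInFiniteQuotient_iff_exists_perm]
  refine exists_congr fun m => ?_
  rw [PresentedGroup.exists_hom_mk_ne_one_iff]
  simp [presRels]

section PermList

variable {m : ℕ}

/-- `s` codes the permutation `j ↦ s[j]` of `Fin m`; the second condition makes `List.idxOf`
compute its inverse. -/
def IsPermList (m : ℕ) (s : List ℕ) : Prop :=
  ∀ j < m, s.getD j 0 < m ∧ s.idxOf (s.getD j 0) = j

noncomputable def permOfList {s : List ℕ} (hs : IsPermList m s) : Perm (Fin m) :=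
  Equiv.ofBijective (fun j => ⟨s.getD j 0, (hs j j.2).1⟩) <|
    Finite.injective_iff_bijective.1 fun i j hij => Fin.ext <| by
      rw [← (hs i i.2).2, ← (hs j j.2).2]
      exact congrArg (fun x : Fin m => s.idxOf (x : ℕ)) hij

theorem permOfList_apply {s : List ℕ} (hs : IsPermList m s) (j : Fin m) :
    (permOfList hs j : ℕ) = s.getD j 0 :=
  rfl

theorem permOfList_symm_apply {s : List ℕ} (hs : IsPermList m s) (x : Fin m) :
    ((permOfList hs).symm x : ℕ) = s.idxOf (x : ℕ) := by
  obtain ⟨j, rfl⟩ := (permOfList hs).surjective x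
  rw [Equiv.symm_apply_apply, permOfList_apply, (hs j j.2).2]

def listOfPerm (σ : Perm (Fin m)) : List ℕ :=
  List.ofFn fun j => (σ j : ℕ)

theorem isPermList_listOfPerm (σ : Perm (Fin m)) : IsPermList m (listOfPerm σ) := by
  intro j hj
  have hnodup : (listOfPerm σ).Nodup := List.nodup_ofFn.2 (Fin.val_injective.comp σ.injective)
  rw [List.getD_eq_getElem _ _ (by simpa [listOfPerm] using hj)]
  exact ⟨by simp [listOfPerm], hnodup.idxOf_getElem j _⟩

end PermList

section WordAction

variable (k : ℕ) (L : List (List ℕ))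

/-- A word acts on the left, so its letters are applied from the right (`List.foldr`); as in
`presLetter`, letters of index `≥ k` act trivially. -/
def letterAct (l : ℕ × Bool) (x : ℕ) : ℕ :=
  if l.1 < k then cond l.2 ((L.getD l.1 []).getD x 0) ((L.getD l.1 []).idxOf x) else x

def wordAct (w : List (ℕ × Bool)) (x : ℕ) : ℕ :=
  w.foldr (letterAct k L) x

def ActsTrivially (m : ℕ) (w : List (ℕ × Bool)) : Prop :=
  ∀ x < m, wordAct k L w x = x

variable {k L} {m : ℕ}

noncomputable def gensOfList (hL : ∀ i < k, IsPermList m (L.getD i [])) : Fin k → Perm (Fin m) :=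
  fun i => permOfList (hL i i.2)

theorem letterAct_eq (hL : ∀ i < k, IsPermList m (L.getD i [])) (l : ℕ × Bool) (x : Fin m) :
    letterAct k L l x = (FreeGroup.lift (gensOfList hL) (presLetter k l) x : ℕ) := by
  obtain ⟨i, b⟩ := l
  by_cases hi : i < k
  · cases b <;>
      simp [letterAct, presLetter, hi, gensOfList, permOfList_apply, permOfList_symm_apply]
  · simp [letterAct, presLetter, hi]

theorem wordAct_eq (hL : ∀ i < k, IsPermList m (L.getD i [])) (w : List (ℕ × Bool))
    (x : Fin m) : wordAct k L w x = (FreeGroup.lift (gensOfList hL) (presWord k w) x : ℕ) := by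
  induction w with
  | nil => simp [wordAct, presWord]
  | cons l w ih =>
    rw [wordAct, List.foldr_cons, ← wordAct, ih, letterAct_eq hL]
    simp [presWord]

theorem lift_presWord_eq_one_iff (hL : ∀ i < k, IsPermList m (L.getD i []))
    (w : List (ℕ × Bool)) :
    FreeGroup.lift (gensOfList hL) (presWord k w) = 1 ↔ ActsTrivially k L m w := by
  simp only [ActsTrivially, Perm.ext_iff, Perm.one_apply, Fin.ext_iff, ← wordAct_eq hL,
    Fin.forall_iff]

end WordAction

def IsSurvivalWitness (P : FinPres) (w : List (ℕ × Bool)) (m : ℕ) (L : List (List ℕ)) :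
    Prop :=
  (∀ i < P.1, IsPermList m (L.getD i [])) ∧ (∀ r ∈ P.2, ActsTrivially P.1 L m r) ∧
    ¬ActsTrivially P.1 L m w

theorem exists_isSurvivalWitness_iff (P : FinPres) (w : List (ℕ × Bool)) (m : ℕ) :
    (∃ L, IsSurvivalWitness P w m L) ↔ ∃ f : Fin P.1 → Perm (Fin m),
      (∀ r ∈ P.2, FreeGroup.lift f (presWord P.1 r) = 1) ∧
        FreeGroup.lift f (presWord P.1 w) ≠ 1 := by
  constructor
  · rintro ⟨L, hL, hrels, hw⟩
    exact ⟨gensOfList hL, fun r hr => (lift_presWord_eq_one_iff hL r).2 (hrels r hr),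
      mt (lift_presWord_eq_one_iff hL w).1 hw⟩
  · rintro ⟨f, hrels, hw⟩
    let L := List.ofFn fun i => listOfPerm (f i)
    have hget (i : Fin P.1) : L.getD i [] = listOfPerm (f i) := by
      simp [L]
    have hL : ∀ i < P.1, IsPermList m (L.getD i []) := fun i hi =>
      hget ⟨i, hi⟩ ▸ isPermList_listOfPerm _
    have hf : gensOfList hL = f := by
      funext i
      ext j
      rw [gensOfList, permOfList_apply, hget]
      simp [listOfPerm]
    rw [← hf] at hrels hw
    exact ⟨L, hL, fun r hr => (lift_presWord_eq_one_iff hL r).1 (hrels r hr),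
      mt (lift_presWord_eq_one_iff hL w).2 hw⟩

section Computability

open Primrec

theorem PrimrecRel.forall_lt_of {α : Type*} [Primcodable α] {R : α → ℕ → Prop} {f : α → ℕ}
    (hR : PrimrecRel R) (hf : Primrec f) : PrimrecPred fun a => ∀ x < f a, R a x :=
  (hR.swap.forall_mem_list.comp (list_range.comp hf) Primrec.id).of_eq fun a => by simp

theorem PrimrecRel.rePred_exists {α β : Type*} [Primcodable α] [Primcodable β]
    {R : α → β → Prop} (hR : PrimrecRel R) : REPred fun a => ∃ b, R a b := by
  classical
  have hguard : Primrec₂ fun (p : α × ℕ) (b : β) => Option.guard (fun b => decide (R p.1 b)) b :=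
    Primrec.option_guard (p := fun (q : (α × ℕ) × β) b => R q.1.1 b)
      (hR.comp (fst.comp (fst.comp fst)) snd) snd
  have hsearch : Computable₂ fun (a : α) (n : ℕ) =>
      (Encodable.decode (α := β) n).bind (Option.guard fun b => decide (R a b)) :=
    Computable.option_bind (Computable.decode.comp Computable.snd) hguard.to_comp
  refine (Partrec.rfindOpt hsearch).dom_re.of_eq fun a => ?_
  rw [Nat.rfindOpt_dom]
  constructor
  · rintro ⟨n, b, hb⟩
    simp only [Option.mem_def, Option.bind_eq_some_iff, Option.guard_eq_some_iff,
      decide_eq_true_eq] at hb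
    obtain ⟨b, -, rfl, hb⟩ := hb
    exact ⟨b, hb⟩
  · rintro ⟨b, hb⟩
    exact ⟨Encodable.encode b, b, by simp [hb]⟩

theorem primrecRel_isPermList : PrimrecRel IsPermList := by
  have hget : Primrec fun p : (ℕ × List ℕ) × ℕ => p.1.2.getD p.2 0 :=
    (list_getD 0).comp (snd.comp fst) snd
  exact PrimrecRel.forall_lt_of ((nat_lt.comp hget (fst.comp fst)).and
    (Primrec.eq.comp (list_idxOf.comp hget (snd.comp fst)) snd)) fst

theorem primrec_letterAct :
    Primrec fun a : (ℕ × List (List ℕ)) × (ℕ × Bool) × ℕ => letterAct a.1.1 a.1.2 a.2.1 a.2.2 := by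
  have hrow : Primrec fun a : (ℕ × List (List ℕ)) × (ℕ × Bool) × ℕ => a.1.2.getD a.2.1.1 [] :=
    (list_getD []).comp (snd.comp fst) (fst.comp (fst.comp snd))
  exact Primrec.ite (nat_lt.comp (fst.comp (fst.comp snd)) (fst.comp fst))
    (Primrec.cond (snd.comp (fst.comp snd)) ((list_getD 0).comp hrow (snd.comp snd))
      (list_idxOf.comp (snd.comp snd) hrow)) (snd.comp snd)

theorem primrec_wordAct :
    Primrec fun a : (ℕ × List (List ℕ)) × List (ℕ × Bool) × ℕ =>
      wordAct a.1.1 a.1.2 a.2.1 a.2.2 :=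
  list_foldr (fst.comp snd) (snd.comp snd) (primrec_letterAct.comp ((fst.comp fst).pair snd)).to₂

theorem primrecRel_actsTrivially :
    PrimrecRel fun (a : (ℕ × List (List ℕ)) × ℕ) (w : List (ℕ × Bool)) =>
      ActsTrivially a.1.1 a.1.2 a.2 w :=
  PrimrecRel.forall_lt_of (Primrec.eq.comp
    (primrec_wordAct.comp ((fst.comp (fst.comp fst)).pair ((snd.comp fst).pair snd))) snd)
    (snd.comp fst)

theorem primrecRel_isSurvivalWitness :
    PrimrecRel fun (pw : FinPres × List (ℕ × Bool)) (c : ℕ × List (List ℕ)) =>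
      IsSurvivalWitness pw.1 pw.2 c.1 c.2 := by
  have hacts : PrimrecRel fun (p : (FinPres × List (ℕ × Bool)) × (ℕ × List (List ℕ)))
      (w : List (ℕ × Bool)) => ActsTrivially p.1.1.1 p.2.2 p.2.1 w :=
    primrecRel_actsTrivially.comp
      (((fst.comp (fst.comp (fst.comp fst))).pair (snd.comp (snd.comp fst))).pair
        (fst.comp (snd.comp fst))) snd
  have hperm : PrimrecRel fun (p : (FinPres × List (ℕ × Bool)) × (ℕ × List (List ℕ))) (i : ℕ) =>
      IsPermList p.2.1 (p.2.2.getD i []) :=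
    primrecRel_isPermList.comp (fst.comp (snd.comp fst))
      ((list_getD []).comp (snd.comp (snd.comp fst)) snd)
  exact (PrimrecRel.forall_lt_of hperm (fst.comp (fst.comp fst))).and
    (((PrimrecRel.forall_mem_list hacts.swap).comp (snd.comp (fst.comp fst)) Primrec.id).and
      (hacts.comp Primrec.id (snd.comp fst)).not)

end Computability

/-- Semidecidability step in the proof of Theorem 3.8: the predicate on pairs `(P, w)`
of a finite presentation and a word in its generators, asserting that the element of the
presented group represented by `w` survives in some finite quotient, is recursively
enumerable. -/
theorem rePred_survives :
    REPred (fun pw : FinPres × List (ℕ × Bool) =>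
      SurvivesInFiniteQuotient (presElt pw.1 pw.2)) := by
  refine primrecRel_isSurvivalWitness.rePred_exists.of_eq fun ⟨P, w⟩ => ?_
  rw [survivesInFiniteQuotient_presElt_iff, Prod.exists]
  exact exists_congr fun m => exists_isSurvivalWitness_iff P w m
end
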